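/- Let Q be the character table of a finite group G. For x ∈ ℂⁿ, the matrix Q D_x Q⁻¹ is entrywise nonnegative if and only if the n inequalities Σ_{k=1}^n |cl(g_k)| χ_i(g_k) x_k ≥ 0 hold for all i = 1,…,n (i.e., only the first-column entries need be checked). -/

import Mathlib

/-!
Column orthogonality identifies the inverse of the character table `Q` as
`M k j = |cl(g k)| χ_j((g k)⁻¹) / |G|`. For a representation `V` put
`s_V = ∑ k |cl(g k)| χ_V(g k) x k`, and let `E = Q D_x Q⁻¹`. Since `E Q = Q D_x`,
`s_{ρ i} = ∑ j E i j ∑_h χ_j(h)`, and `∑_h χ_j(h) = |G| dim (ρ j)^G ≥ 0`. Conversely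
`E i j = s_T / |G|` for `T = ρ i ⊗ (ρ j)*`, and expanding `χ_T` in irreducible characters, whose
coefficients are the multiplicities `⟨χ_T, χ_m⟩ ≥ 0`, writes `s_T` as a nonnegative combination
of the `s_{ρ m}`.
-/

open scoped ComplexOrder
open CategoryTheory

/-- The character table of a finite group: rows indexed by (irreducible) representations,
columns by conjugacy-class representatives. -/
noncomputable def charTable {G : Type} [Group G] {n : ℕ}
    (ρ : Fin n → FDRep ℂ G) (g : Fin n → G) : Matrix (Fin n) (Fin n) ℂ :=
  Matrix.of fun i j => (ρ i).character (g j)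

open Matrix MonoidalCategory

section ClassFunctions

variable {G : Type} [Group G] [Fintype G]

theorem sum_eq_sum_card_conj_mul {R : Type*} [NonAssocSemiring R] {n : ℕ} (g : Fin n → G)
    (hgdist : ∀ i j, IsConj (g i) (g j) → i = j) (hgall : ∀ h : G, ∃ i, IsConj h (g i))
    (f : G → R) (hf : ∀ a h, f (a * h * a⁻¹) = f h) :
    ∑ h, f h = ∑ k, (Nat.card {h : G // IsConj (g k) h} : R) * f (g k) := by
  classical
  choose idx hidx using hgall
  have hfiber : ∀ k h, idx h = k ↔ IsConj (g k) h := fun k h =>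
    ⟨by rintro rfl; exact (hidx h).symm,
      fun hk => hgdist _ _ ((hidx h).symm.trans hk.symm)⟩
  rw [← Finset.sum_fiberwise Finset.univ idx f]
  refine Finset.sum_congr rfl fun k _ => ?_
  rw [Nat.card_eq_fintype_card, Fintype.card_subtype, ← nsmul_eq_mul, ← Finset.sum_const]
  refine Finset.sum_congr (by simp only [hfiber]) fun h hh => ?_
  obtain ⟨a, rfl⟩ := isConj_iff.mp (Finset.mem_filter.mp hh).2
  exact hf a (g k)

theorem FDRep.sum_character_nonneg (V : FDRep ℂ G) : 0 ≤ ∑ h, V.character h := by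
  have hV := V.average_char_eq_finrank_invariants
  rw [inv_mul_eq_iff_eq_mul₀ (by simp)] at hV
  rw [hV]
  positivity

theorem FDRep.sum_character_mul_character_inv_nonneg (V W : FDRep ℂ G) :
    0 ≤ ∑ h, V.character h * W.character h⁻¹ := by
  have hT := (V ⊗ FDRep.of (Representation.dual W.ρ)).sum_character_nonneg
  simp only [FDRep.char_tensor, Pi.mul_apply, FDRep.char_dual] at hT
  exact hT

end ClassFunctions

section CharacterTable

variable {G : Type} [Group G] {n : ℕ}

theorem charTable_apply (ρ : Fin n → FDRep ℂ G) (g : Fin n → G) (i j : Fin n) :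
    charTable ρ g i j = (ρ i).character (g j) := rfl

variable [Fintype G]

noncomputable def charTableInv (ρ : Fin n → FDRep ℂ G) (g : Fin n → G) :
    Matrix (Fin n) (Fin n) ℂ :=
  Matrix.of fun k j =>
    Nat.card {h : G // IsConj (g k) h} * (ρ j).character (g k)⁻¹ / Fintype.card G

variable {ρ : Fin n → FDRep ℂ G} {g : Fin n → G}

theorem sum_character_mul_charTableInv (hgdist : ∀ i j, IsConj (g i) (g j) → i = j)
    (hgall : ∀ h : G, ∃ i, IsConj h (g i)) (V : FDRep ℂ G) (j : Fin n) :
    ∑ k, V.character (g k) * charTableInv ρ g k j =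
      (Fintype.card G : ℂ)⁻¹ * ∑ h, V.character h * (ρ j).character h⁻¹ := by
  have hclass (a h : G) :
      V.character (a * h * a⁻¹) * (ρ j).character (a * h * a⁻¹)⁻¹ =
        V.character h * (ρ j).character h⁻¹ := by
    rw [show (a * h * a⁻¹)⁻¹ = a * h⁻¹ * a⁻¹ by group, FDRep.char_conj, FDRep.char_conj]
  rw [sum_eq_sum_card_conj_mul g hgdist hgall _ hclass, Finset.mul_sum]
  refine Finset.sum_congr rfl fun k _ => ?_
  simp only [charTableInv, of_apply]
  ring

theorem charTable_mul_charTableInv (hsimple : ∀ i, Simple (ρ i))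
    (hdistinct : ∀ i j, Nonempty (ρ i ≅ ρ j) → i = j)
    (hgdist : ∀ i j, IsConj (g i) (g j) → i = j) (hgall : ∀ h : G, ∃ i, IsConj h (g i)) :
    charTable ρ g * charTableInv ρ g = 1 := by
  classical
  ext i j
  have := hsimple i
  have := hsimple j
  rw [mul_apply, Fintype.sum_congr _ _ fun k => by rw [charTable_apply],
    sum_character_mul_charTableInv hgdist hgall, ← Nat.card_eq_fintype_card,
    FDRep.char_orthonormal, one_apply]
  exact if_congr ⟨hdistinct i j, by rintro rfl; exact ⟨Iso.refl _⟩⟩ rfl rfl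

theorem charTableInv_mul_charTable (hsimple : ∀ i, Simple (ρ i))
    (hdistinct : ∀ i j, Nonempty (ρ i ≅ ρ j) → i = j)
    (hgdist : ∀ i j, IsConj (g i) (g j) → i = j) (hgall : ∀ h : G, ∃ i, IsConj h (g i)) :
    charTableInv ρ g * charTable ρ g = 1 :=
  mul_eq_one_comm.mp (charTable_mul_charTableInv hsimple hdistinct hgdist hgall)

theorem inv_charTable (hsimple : ∀ i, Simple (ρ i))
    (hdistinct : ∀ i j, Nonempty (ρ i ≅ ρ j) → i = j)
    (hgdist : ∀ i j, IsConj (g i) (g j) → i = j) (hgall : ∀ h : G, ∃ i, IsConj h (g i)) :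
    (charTable ρ g)⁻¹ = charTableInv ρ g :=
  inv_eq_right_inv (charTable_mul_charTableInv hsimple hdistinct hgdist hgall)

theorem sum_card_conj_mul_character_mul_eq (hsimple : ∀ i, Simple (ρ i))
    (hdistinct : ∀ i j, Nonempty (ρ i ≅ ρ j) → i = j)
    (hgdist : ∀ i j, IsConj (g i) (g j) → i = j) (hgall : ∀ h : G, ∃ i, IsConj h (g i))
    (x : Fin n → ℂ) (i : Fin n) :
    ∑ k, (Nat.card {h : G // IsConj (g k) h} : ℂ) * (ρ i).character (g k) * x k =
      ∑ j, (charTable ρ g * diagonal x * (charTable ρ g)⁻¹) i j * ∑ h, (ρ j).character h := by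
  set cl : Fin n → ℂ := fun k => Nat.card {h : G // IsConj (g k) h}
  have hconj : charTable ρ g * diagonal x * (charTable ρ g)⁻¹ * charTable ρ g =
      charTable ρ g * diagonal x := by
    rw [inv_charTable hsimple hdistinct hgdist hgall, Matrix.mul_assoc,
      charTableInv_mul_charTable hsimple hdistinct hgdist hgall, Matrix.mul_one]
  have hcolumns (j : Fin n) : (charTable ρ g *ᵥ cl) j = ∑ h, (ρ j).character h := by
    rw [sum_eq_sum_card_conj_mul g hgdist hgall _ fun a h => FDRep.char_conj _ h a]
    simp only [mulVec, dotProduct, charTable_apply]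
    exact Finset.sum_congr rfl fun k _ => mul_comm _ _
  calc ∑ k, cl k * (ρ i).character (g k) * x k
      = ((charTable ρ g * diagonal x) *ᵥ cl) i := by
        simp only [mulVec, dotProduct, mul_diagonal, charTable_apply]
        exact Finset.sum_congr rfl fun k _ => by ring
    _ = ((charTable ρ g * diagonal x * (charTable ρ g)⁻¹) *ᵥ (charTable ρ g *ᵥ cl)) i := by
        rw [mulVec_mulVec, hconj]
    _ = _ := by simp only [mulVec, dotProduct, ← hcolumns]

theorem sum_card_conj_mul_character_mul_nonneg (hsimple : ∀ i, Simple (ρ i))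
    (hdistinct : ∀ i j, Nonempty (ρ i ≅ ρ j) → i = j)
    (hgdist : ∀ i j, IsConj (g i) (g j) → i = j) (hgall : ∀ h : G, ∃ i, IsConj h (g i))
    {x : Fin n → ℂ}
    (hx : ∀ m, 0 ≤ ∑ k, (Nat.card {h : G // IsConj (g k) h} : ℂ) * (ρ m).character (g k) * x k)
    (V : FDRep ℂ G) :
    0 ≤ ∑ k, (Nat.card {h : G // IsConj (g k) h} : ℂ) * V.character (g k) * x k := by
  set t : Fin n → ℂ := fun k => V.character (g k)
  set u : Fin n → ℂ := fun k => Nat.card {h : G // IsConj (g k) h} * x k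
  have hcoeff (m : Fin n) : 0 ≤ (t ᵥ* charTableInv ρ g) m := by
    rw [vecMul, dotProduct, sum_character_mul_charTableInv hgdist hgall]
    exact mul_nonneg (by positivity) (V.sum_character_mul_character_inv_nonneg (ρ m))
  have hexpand : t = t ᵥ* charTableInv ρ g ᵥ* charTable ρ g := by
    rw [vecMul_vecMul, charTableInv_mul_charTable hsimple hdistinct hgdist hgall, vecMul_one]
  have hrows (m : Fin n) : 0 ≤ (charTable ρ g *ᵥ u) m := by
    convert hx m using 1
    simp only [mulVec, dotProduct, charTable_apply]
    exact Finset.sum_congr rfl fun k _ => by ring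
  calc 0 ≤ (t ᵥ* charTableInv ρ g) ⬝ᵥ (charTable ρ g *ᵥ u) :=
        Finset.sum_nonneg fun m _ => mul_nonneg (hcoeff m) (hrows m)
    _ = t ⬝ᵥ u := by rw [dotProduct_mulVec, ← hexpand]
    _ = _ := Finset.sum_congr rfl fun k _ => by ring

theorem charTable_mul_diagonal_mul_inv_apply (hsimple : ∀ i, Simple (ρ i))
    (hdistinct : ∀ i j, Nonempty (ρ i ≅ ρ j) → i = j)
    (hgdist : ∀ i j, IsConj (g i) (g j) → i = j) (hgall : ∀ h : G, ∃ i, IsConj h (g i))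
    (x : Fin n → ℂ) (i j : Fin n) :
    (charTable ρ g * diagonal x * (charTable ρ g)⁻¹) i j =
      (Fintype.card G : ℂ)⁻¹ * ∑ k, (Nat.card {h : G // IsConj (g k) h} : ℂ) *
        (ρ i ⊗ FDRep.of (Representation.dual (ρ j).ρ)).character (g k) * x k := by
  rw [inv_charTable hsimple hdistinct hgdist hgall, mul_apply, Finset.mul_sum]
  refine Finset.sum_congr rfl fun k _ => ?_
  simp only [mul_diagonal, charTable_apply, charTableInv, of_apply, FDRep.char_tensor,
    Pi.mul_apply, FDRep.char_dual]
  ring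

end CharacterTable

theorem stmt12_general {G : Type} [Group G] [Fintype G] {n : ℕ}
    (ρ : Fin n → FDRep ℂ G)
    (hsimple : ∀ i, Simple (ρ i))
    (hdistinct : ∀ i j, Nonempty (ρ i ≅ ρ j) → i = j)
    (g : Fin n → G)
    (hgdist : ∀ i j, IsConj (g i) (g j) → i = j)
    (hgall : ∀ h : G, ∃ i, IsConj h (g i)) (x : Fin n → ℂ) :
    (∀ i j, 0 ≤ (charTable ρ g * Matrix.diagonal x * (charTable ρ g)⁻¹) i j) ↔
      ∀ i, 0 ≤ ∑ k, (Nat.card {h : G // IsConj (g k) h} : ℂ) *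
        (ρ i).character (g k) * x k := by
  constructor
  · intro hE i
    rw [sum_card_conj_mul_character_mul_eq hsimple hdistinct hgdist hgall]
    exact Finset.sum_nonneg fun j _ => mul_nonneg (hE i j) (ρ j).sum_character_nonneg
  · intro hx i j
    rw [charTable_mul_diagonal_mul_inv_apply hsimple hdistinct hgdist hgall]
    exact mul_nonneg (by positivity)
      (sum_card_conj_mul_character_mul_nonneg hsimple hdistinct hgdist hgall hx _)

theorem stmt12 {G : Type} [Group G] [Fintype G] {n : ℕ}
    (ρ : Fin n → FDRep ℂ G)
    (hsimple : ∀ i, Simple (ρ i))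
    (hdistinct : ∀ i j, Nonempty (ρ i ≅ ρ j) → i = j)
    (hcomplete : ∀ V : FDRep ℂ G, Simple V → ∃ i, Nonempty (V ≅ ρ i))
    (g : Fin n → G)
    (hgdist : ∀ i j, IsConj (g i) (g j) → i = j)
    (hgall : ∀ h : G, ∃ i, IsConj h (g i)) (x : Fin n → ℂ) :
    (∀ i j, 0 ≤ (charTable ρ g * Matrix.diagonal x * (charTable ρ g)⁻¹) i j) ↔
      ∀ i, 0 ≤ ∑ k, (Nat.card {h : G // IsConj (g k) h} : ℂ) *
        (ρ i).character (g k) * x k :=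
  stmt12_general ρ hsimple hdistinct g hgdist hgall x
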